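/- Let v¹,…,vⁿ be an orthonormal basis of ℝⁿ, α₁,…,αₙ > 0, and λ ∈ [0,1]. For a ∈ ℝⁿ: (∑ᵢ αᵢ^(2λ)⟨a,vⁱ⟩²)^(1/2) ≤ (1-λ)(∑ᵢ ⟨a,vⁱ⟩²)^(1/2) + λ(∑ᵢ αᵢ²⟨a,vⁱ⟩²)^(1/2), and when λ ∈ (0,1) equality holds if and only if αᵢ = 1 for all i with ⟨a,vⁱ⟩ ≠ 0. -/

import Mathlib

/-!
Bernoulli's inequality gives `αᵢ ^ λ ≤ 1 - λ + λ αᵢ`, strictly when `0 < λ < 1` and `αᵢ ≠ 1`.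
Hence, with `cᵢ = ⟪a, vⁱ⟫`, the left side is at most the Euclidean norm of `(1 - λ + λ αᵢ) cᵢ`,
which by the triangle inequality is at most `(1 - λ) ‖c‖ + λ ‖α c‖`; equality forces equality in
every term with `cᵢ ≠ 0`.
-/

open scoped RealInnerProductSpace

open Finset

namespace Real

lemma rpow_le_one_sub_add_mul {x l : ℝ} (hx : 0 ≤ x) (hl₀ : 0 ≤ l) (hl₁ : l ≤ 1) :
    x ^ l ≤ 1 - l + l * x := by
  have := rpow_one_add_le_one_add_mul_self (s := x - 1) (by linarith) hl₀ hl₁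
  rw [add_sub_cancel] at this
  linarith

lemma rpow_lt_one_sub_add_mul {x l : ℝ} (hx : 0 ≤ x) (hx₁ : x ≠ 1) (hl₀ : 0 < l) (hl₁ : l < 1) :
    x ^ l < 1 - l + l * x := by
  have := rpow_one_add_lt_one_add_mul_self (s := x - 1) (by linarith) (sub_ne_zero.2 hx₁) hl₀ hl₁
  rw [add_sub_cancel] at this
  linarith

lemma rpow_two_mul_mul_sq {x : ℝ} (hx : 0 ≤ x) (l c : ℝ) : x ^ (2 * l) * c ^ 2 = (x ^ l * c) ^ 2 := by
  rw [mul_comm 2 l, ← Nat.cast_ofNat, rpow_mul_natCast hx, mul_pow]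

lemma rpow_two_mul_mul_sq_le {x l : ℝ} (hx : 0 ≤ x) (hl₀ : 0 ≤ l) (hl₁ : l ≤ 1) (c : ℝ) :
    x ^ (2 * l) * c ^ 2 ≤ ((1 - l + l * x) * c) ^ 2 := by
  rw [rpow_two_mul_mul_sq hx, mul_pow, mul_pow]
  gcongr
  exact rpow_le_one_sub_add_mul hx hl₀ hl₁

lemma rpow_two_mul_mul_sq_lt {x l c : ℝ} (hx : 0 ≤ x) (hx₁ : x ≠ 1) (hl₀ : 0 < l) (hl₁ : l < 1)
    (hc : c ≠ 0) : x ^ (2 * l) * c ^ 2 < ((1 - l + l * x) * c) ^ 2 := by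
  rw [rpow_two_mul_mul_sq hx, mul_pow, mul_pow]
  gcongr
  exact rpow_lt_one_sub_add_mul hx hx₁ hl₀ hl₁

variable {ι : Type*} [Fintype ι]

lemma sqrt_sum_add_sq_le (f g : ι → ℝ) :
    √(∑ i, (f i + g i) ^ 2) ≤ √(∑ i, f i ^ 2) + √(∑ i, g i ^ 2) := by
  simpa [EuclideanSpace.norm_eq, sq_abs] using
    norm_add_le (WithLp.toLp 2 f : EuclideanSpace ℝ ι) (WithLp.toLp 2 g)

lemma sqrt_sum_mul_sq {t : ℝ} (ht : 0 ≤ t) (f : ι → ℝ) :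
    √(∑ i, (t * f i) ^ 2) = t * √(∑ i, f i ^ 2) := by
  simp_rw [mul_pow, ← mul_sum, sqrt_mul (sq_nonneg t), sqrt_sq ht]

lemma sqrt_sum_one_sub_add_mul_mul_sq_le (α c : ι → ℝ) {l : ℝ} (hl₀ : 0 ≤ l) (hl₁ : l ≤ 1) :
    √(∑ i, ((1 - l + l * α i) * c i) ^ 2) ≤
      (1 - l) * √(∑ i, c i ^ 2) + l * √(∑ i, α i ^ 2 * c i ^ 2) := by
  have key := sqrt_sum_add_sq_le (fun i ↦ (1 - l) * c i) (fun i ↦ l * (α i * c i))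
  simp only [sqrt_sum_mul_sq (sub_nonneg.2 hl₁), sqrt_sum_mul_sq hl₀] at key
  simp only [mul_pow (α _)] at key
  convert key using 4 with i
  ring

lemma sum_rpow_mul_sq_le (α c : ι → ℝ) (hα : ∀ i, 0 ≤ α i) {l : ℝ} (hl₀ : 0 ≤ l) (hl₁ : l ≤ 1) :
    ∑ i, α i ^ (2 * l) * c i ^ 2 ≤ ∑ i, ((1 - l + l * α i) * c i) ^ 2 :=
  sum_le_sum fun i _ ↦ rpow_two_mul_mul_sq_le (hα i) hl₀ hl₁ (c i)

theorem sqrt_sum_rpow_mul_sq_le (α c : ι → ℝ) (hα : ∀ i, 0 ≤ α i) {l : ℝ} (hl₀ : 0 ≤ l)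
    (hl₁ : l ≤ 1) :
    √(∑ i, α i ^ (2 * l) * c i ^ 2) ≤
      (1 - l) * √(∑ i, c i ^ 2) + l * √(∑ i, α i ^ 2 * c i ^ 2) :=
  (sqrt_le_sqrt (sum_rpow_mul_sq_le α c hα hl₀ hl₁)).trans
    (sqrt_sum_one_sub_add_mul_mul_sq_le α c hl₀ hl₁)

theorem sqrt_sum_rpow_mul_sq_eq_iff (α c : ι → ℝ) (hα : ∀ i, 0 ≤ α i) {l : ℝ} (hl₀ : 0 < l)
    (hl₁ : l < 1) :
    √(∑ i, α i ^ (2 * l) * c i ^ 2) =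
        (1 - l) * √(∑ i, c i ^ 2) + l * √(∑ i, α i ^ 2 * c i ^ 2) ↔
      ∀ i, c i ≠ 0 → α i = 1 := by
  constructor
  · intro heq i hci
    by_contra hαi
    have hsum_lt : ∑ i, α i ^ (2 * l) * c i ^ 2 < ∑ i, ((1 - l + l * α i) * c i) ^ 2 :=
      sum_lt_sum (fun j _ ↦ rpow_two_mul_mul_sq_le (hα j) hl₀.le hl₁.le (c j))
        ⟨i, mem_univ i, rpow_two_mul_mul_sq_lt (hα i) hαi hl₀ hl₁ hci⟩
    have hsqrt_lt := sqrt_lt_sqrt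
      (sum_nonneg fun j _ ↦ mul_nonneg (rpow_nonneg (hα j) _) (sq_nonneg _)) hsum_lt
    linarith [sqrt_sum_one_sub_add_mul_mul_sq_le α c hl₀.le hl₁.le]
  · intro h
    have hcoef : ∀ i, α i ^ (2 * l) * c i ^ 2 = c i ^ 2 ∧ α i ^ 2 * c i ^ 2 = c i ^ 2 := by
      intro i
      by_cases hci : c i = 0
      · simp [hci]
      · simp [h i hci]
    simp only [hcoef]
    ring

end Real

theorem stmt_9 {n : ℕ} (v : Fin n → EuclideanSpace ℝ (Fin n))
    (α : Fin n → ℝ) (hα : ∀ i, 0 < α i) (l : ℝ) (hl : l ∈ Set.Icc (0:ℝ) 1)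
    (a : EuclideanSpace ℝ (Fin n)) :
    Real.sqrt (∑ i, (α i) ^ (2 * l) * ⟪a, v i⟫ ^ 2) ≤
      (1 - l) * Real.sqrt (∑ i, ⟪a, v i⟫ ^ 2) + l * Real.sqrt (∑ i, (α i) ^ 2 * ⟪a, v i⟫ ^ 2) ∧
    (l ∈ Set.Ioo (0:ℝ) 1 →
      (Real.sqrt (∑ i, (α i) ^ (2 * l) * ⟪a, v i⟫ ^ 2) =
        (1 - l) * Real.sqrt (∑ i, ⟪a, v i⟫ ^ 2) + l * Real.sqrt (∑ i, (α i) ^ 2 * ⟪a, v i⟫ ^ 2) ↔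
        ∀ i, ⟪a, v i⟫ ≠ 0 → α i = 1)) :=
  have hα₀ i : 0 ≤ α i := (hα i).le
  ⟨Real.sqrt_sum_rpow_mul_sq_le α _ hα₀ hl.1 hl.2,
    fun hl' ↦ Real.sqrt_sum_rpow_mul_sq_eq_iff α _ hα₀ hl'.1 hl'.2⟩
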